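/- arXiv:2102.02436 — 3 statements merged into one kernel-verified Lean document; each statement's English description precedes it below -/
import Mathlib

section
/- For every finite field F_q and every integer N ≥ 2, the minimum bandwidth over two-row configurations equals B̄*(2) = 2N(N−1) − ⌊N²/2⌋. -/
open scoped Classical

/-- Membership in the class 𝓛 : first column zero, both entries of the
second column nonzero. -/
def matL {F : Type*} [Field F] (B : Matrix (Fin 2) (Fin 2) F) : Prop :=
  (∀ p, B p 0 = 0) ∧ (∀ p, B p 1 ≠ 0)

/-- Membership in the class 𝓡 : second column zero, both entries of the
first column nonzero. -/
def matR {F : Type*} [Field F] (B : Matrix (Fin 2) (Fin 2) F) : Prop :=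
  (∀ p, B p 1 = 0) ∧ (∀ p, B p 0 ≠ 0)

/-- Partial sums `ℓ*_r = ℓ_1 + ⋯ + ℓ_r` of a tuple `ℓ` (0-indexed: the sum
of the entries of index `< r`). -/
def psum {R : ℕ} (ℓ : Fin R → ℕ) (r : ℕ) : ℕ :=
  ∑ k ∈ Finset.univ.filter (fun k : Fin R => (k : ℕ) < r), ℓ k

/-- The defining conditions for membership of an `R × N` array of 2×2 blocks
in the class `H(R, R_L, ℓ)`:
(i) the blocks in row `r` and columns `ℓ*_{r-1} < i ≤ ℓ*_r` (1-indexed) are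
invertible;
(ii) in the first `R_L` rows every block of `𝓛 ∪ 𝓡` lies in `𝓛`, and in the
remaining rows every block of `𝓛 ∪ 𝓡` lies in `𝓡`;
(iii) no two distinct rows among the first `R_L` have two common distinct
columns with all four blocks in `𝓛`, and no two distinct rows among the
remaining ones have two common distinct columns with all four blocks in `𝓡`. -/
def memH {F : Type*} [Field F] (N R RL : ℕ) (ℓ : Fin R → ℕ)
    (H : Fin R → Fin N → Matrix (Fin 2) (Fin 2) F) : Prop :=
  (∀ (r : Fin R) (i : Fin N),
      psum ℓ (r : ℕ) ≤ (i : ℕ) → (i : ℕ) < psum ℓ ((r : ℕ) + 1) → IsUnit (H r i)) ∧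
  (∀ (r : Fin R) (j : Fin N), (r : ℕ) < RL →
      (matL (H r j) ∨ matR (H r j)) → matL (H r j)) ∧
  (∀ (r : Fin R) (j : Fin N), RL ≤ (r : ℕ) →
      (matL (H r j) ∨ matR (H r j)) → matR (H r j)) ∧
  (¬ ∃ (r₁ r₂ : Fin R) (i j : Fin N), r₁ ≠ r₂ ∧ i ≠ j ∧
      (r₁ : ℕ) < RL ∧ (r₂ : ℕ) < RL ∧
      matL (H r₁ i) ∧ matL (H r₂ i) ∧ matL (H r₁ j) ∧ matL (H r₂ j)) ∧
  (¬ ∃ (r₁ r₂ : Fin R) (i j : Fin N), r₁ ≠ r₂ ∧ i ≠ j ∧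
      RL ≤ (r₁ : ℕ) ∧ RL ≤ (r₂ : ℕ) ∧
      matR (H r₁ i) ∧ matR (H r₂ i) ∧ matR (H r₁ j) ∧ matR (H r₂ j))

/-- `|J_r(H̄)|`, the number of columns whose block in row `r` lies in `𝓛 ∪ 𝓡`. -/
noncomputable def Jcard {F : Type*} [Field F] {N R : ℕ}
    (H : Fin R → Fin N → Matrix (Fin 2) (Fin 2) F) (r : Fin R) : ℕ :=
  (Finset.univ.filter (fun j : Fin N => matL (H r j) ∨ matR (H r j))).card

/-- The bandwidth `B(H̄) = 2N(N-1) - Σ_r ℓ_r·|J_r(H̄)|` of a configuration. -/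
noncomputable def BH {F : Type*} [Field F] {R : ℕ} (N : ℕ) (ℓ : Fin R → ℕ)
    (H : Fin R → Fin N → Matrix (Fin 2) (Fin 2) F) : ℤ :=
  2 * (N : ℤ) * ((N : ℤ) - 1) - ∑ r, (ℓ r : ℤ) * (Jcard H r : ℤ)

/-- The set of bandwidths of all configurations in
`H(R) = ⋃_{R_L, ℓ} H(R, R_L, ℓ)`. -/
def bandSet (F : Type*) [Field F] (N R : ℕ) : Set ℤ :=
  {b | ∃ (RL : ℕ) (ℓ : Fin R → ℕ)
        (H : Fin R → Fin N → Matrix (Fin 2) (Fin 2) F),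
      RL ≤ R ∧ (∀ r, 1 ≤ ℓ r) ∧ (∑ r, ℓ r) = N ∧ memH N R RL ℓ H ∧
      b = BH N ℓ H}

/- ## auxiliary lemmas -/

lemma matL_not_unit {F : Type*} [Field F] {B : Matrix (Fin 2) (Fin 2) F}
    (h : matL B) : ¬ IsUnit B := by
  intro hu
  have hd : IsUnit B.det := (Matrix.isUnit_iff_isUnit_det B).mp hu
  rw [Matrix.det_fin_two, h.1 0, h.1 1] at hd
  simp at hd

lemma matR_not_unit {F : Type*} [Field F] {B : Matrix (Fin 2) (Fin 2) F}
    (h : matR B) : ¬ IsUnit B := by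
  intro hu
  have hd : IsUnit B.det := (Matrix.isUnit_iff_isUnit_det B).mp hu
  rw [Matrix.det_fin_two, h.1 0, h.1 1] at hd
  simp at hd

lemma card_filter_lt (N c : ℕ) (h : c ≤ N) :
    (Finset.univ.filter (fun j : Fin N => (j:ℕ) < c)).card = c := by
  have he : (Finset.univ.filter (fun j : Fin N => (j:ℕ) < c)) =
      Finset.map (Fin.castLEEmb h) Finset.univ := by
    ext j
    simp only [Finset.mem_filter, Finset.mem_univ, true_and, Finset.mem_map,
      Fin.castLEEmb, Function.Embedding.coeFn_mk]
    constructor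
    · intro hj; exact ⟨⟨j, hj⟩, rfl⟩
    · rintro ⟨i, rfl⟩; exact i.2
  rw [he]; simp

lemma card_filter_not_lt (N c : ℕ) (h : c ≤ N) :
    (Finset.univ.filter (fun j : Fin N => ¬ (j:ℕ) < c)).card = N - c := by
  have h1 := Finset.card_filter_add_card_filter_not
    (s := (Finset.univ : Finset (Fin N))) (p := fun j : Fin N => (j:ℕ) < c)
  have h2 : (Finset.filter (fun a : Fin N => ¬ (fun j : Fin N => (j:ℕ) < c) a)
      Finset.univ) = Finset.filter (fun j : Fin N => ¬ (j:ℕ) < c) Finset.univ := rfl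
  rw [card_filter_lt N c h, h2] at h1
  simp only [Finset.card_univ, Fintype.card_fin] at h1
  omega

lemma half_sq (N : ℕ) : 2 * (N / 2) * (N - N / 2) = N ^ 2 / 2 := by
  rcases Nat.even_or_odd N with ⟨k, hk⟩ | ⟨k, hk⟩
  · subst hk
    have h1 : (k + k) / 2 = k := by omega
    have h3 : k + k - k = k := by omega
    have h2 : (k + k) ^ 2 = 2 * k ^ 2 * 2 := by ring
    rw [h1, h3, h2, Nat.mul_div_cancel _ (by norm_num)]
    ring
  · subst hk
    have h1 : (2 * k + 1) / 2 = k := by omega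
    have h3 : 2 * k + 1 - k = k + 1 := by omega
    have h2 : (2 * k + 1) ^ 2 = 2 * (2 * k ^ 2 + 2 * k) + 1 := by ring
    rw [h1, h3, h2, Nat.mul_add_div (by norm_num)]
    simp; ring

lemma two_mul_le_half_sq (a b : ℕ) : 2 * a * b ≤ (a + b) ^ 2 / 2 := by
  rw [Nat.le_div_iff_mul_le (by norm_num)]
  zify
  nlinarith [sq_nonneg ((a : ℤ) - b)]

lemma psum_one (ℓ : Fin 2 → ℕ) : psum ℓ 1 = ℓ 0 := by
  rw [psum, Finset.sum_filter, Fin.sum_univ_two]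
  norm_num

lemma psum_two (ℓ : Fin 2 → ℕ) : psum ℓ 2 = ℓ 0 + ℓ 1 := by
  rw [psum, Finset.sum_filter, Fin.sum_univ_two]
  norm_num

/-- The `𝓛`-block used in the construction. -/
def Lm (F : Type*) [Field F] : Matrix (Fin 2) (Fin 2) F :=
  Matrix.of fun _ q => if q = 1 then 1 else 0

/-- The `𝓡`-block used in the construction. -/
def Rm (F : Type*) [Field F] : Matrix (Fin 2) (Fin 2) F :=
  Matrix.of fun _ q => if q = 0 then 1 else 0

lemma matL_Lm (F : Type*) [Field F] : matL (Lm F) := by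
  constructor <;> intro p <;> simp [Lm]

lemma matR_Rm (F : Type*) [Field F] : matR (Rm F) := by
  constructor <;> intro p <;> simp [Rm]

lemma not_matR_Lm (F : Type*) [Field F] : ¬ matR (Lm F) := by
  intro h
  have := h.2 0
  simp [Lm] at this

lemma not_matL_Rm (F : Type*) [Field F] : ¬ matL (Rm F) := by
  intro h
  have := h.2 0
  simp [Rm] at this


/-- for every finite field and every `N ≥ 2`, the minimum
bandwidth over two-row configurations is `B̄*(2) = 2N(N-1) - ⌊N²/2⌋`. -/
theorem statement13 (F : Type*) [Field F] [Fintype F] (N : ℕ) (hN : 2 ≤ N) :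
    IsLeast (bandSet F N 2)
      (2 * (N : ℤ) * ((N : ℤ) - 1) - ((N ^ 2 / 2 : ℕ) : ℤ)) := by
  constructor
  · -- membership: the mixed configuration with ℓ = (⌊N/2⌋, ⌈N/2⌉)
    set a := N / 2 with ha
    set b := N - N / 2 with hb
    have hab : a + b = N := by omega
    have ha1 : 1 ≤ a := by omega
    have hb1 : 1 ≤ b := by omega
    refine ⟨1, ![a, b],
      fun r j => if r = 0 then (if (j : ℕ) < a then 1 else Lm F)
        else (if (j : ℕ) < a then Rm F else 1),
      by norm_num, ?_, ?_, ?_, ?_⟩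
    · intro r; fin_cases r <;> simpa
    · rw [Fin.sum_univ_two]; simpa using hab
    · refine ⟨?_, ?_, ?_, ?_, ?_⟩
      · intro r i h1 h2
        fin_cases r
        · simp only [Fin.val_zero, zero_add, psum_one] at h2
          simp only [Matrix.cons_val_zero] at h2
          simp [h2]
        · simp only [Fin.val_one, psum_one] at h1
          simp only [Matrix.cons_val_zero] at h1
          have : ¬ (i : ℕ) < a := by omega
          simp [this, Fin.ext_iff]
      · intro r j hr hor
        have hr0 : r = 0 := by
          apply Fin.ext; simpa using Nat.lt_one_iff.mp hr
        subst hr0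
        simp only [if_pos rfl] at hor ⊢
        by_cases hj : (j : ℕ) < a
        · rw [if_pos hj] at hor
          rcases hor with h | h
          · exact absurd h (fun h => matL_not_unit h isUnit_one)
          · exact absurd h (fun h => matR_not_unit h isUnit_one)
        · rw [if_neg hj]
          exact matL_Lm F
      · intro r j hr hor
        have hr1 : r = 1 := by
          apply Fin.ext; have := r.2; simp at hr ⊢; omega
        subst hr1
        simp only [if_neg (by norm_num : (1 : Fin 2) ≠ 0)] at hor ⊢
        by_cases hj : (j : ℕ) < a
        · rw [if_pos hj]
          exact matR_Rm F
        · rw [if_neg hj] at hor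
          rcases hor with h | h
          · exact absurd h (fun h => matL_not_unit h isUnit_one)
          · exact absurd h (fun h => matR_not_unit h isUnit_one)
      · rintro ⟨r₁, r₂, i, j, hne, -, h1, h2, -⟩
        have e1 : r₁ = 0 := Fin.ext (by simpa using Nat.lt_one_iff.mp h1)
        have e2 : r₂ = 0 := Fin.ext (by simpa using Nat.lt_one_iff.mp h2)
        exact hne (e1.trans e2.symm)
      · rintro ⟨r₁, r₂, i, j, hne, -, h1, h2, -⟩
        have e1 : r₁ = 1 := Fin.ext (by have := r₁.2; simp at h1 ⊢; omega)
        have e2 : r₂ = 1 := Fin.ext (by have := r₂.2; simp at h2 ⊢; omega)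
        exact hne (e1.trans e2.symm)
    · -- value of the bandwidth
      have hJ0 : Jcard (fun (r : Fin 2) (j : Fin N) => if r = 0 then (if (j : ℕ) < a then 1 else Lm F)
          else (if (j : ℕ) < a then Rm F else 1)) (0 : Fin 2) = b := by
        rw [Jcard]
        have : (Finset.univ.filter (fun j : Fin N =>
            matL (if (0 : Fin 2) = 0 then (if (j : ℕ) < a then 1 else Lm F)
              else (if (j : ℕ) < a then Rm F else 1)) ∨
            matR (if (0 : Fin 2) = 0 then (if (j : ℕ) < a then 1 else Lm F)
              else (if (j : ℕ) < a then Rm F else 1)))) =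
            Finset.univ.filter (fun j : Fin N => ¬ (j : ℕ) < a) := by
          apply Finset.filter_congr
          intro j _
          simp only [if_pos rfl]
          by_cases hj : (j : ℕ) < a
          · simp only [if_pos hj]
            constructor
            · rintro (h | h)
              · exact absurd h (fun h => matL_not_unit h isUnit_one)
              · exact absurd h (fun h => matR_not_unit h isUnit_one)
            · intro h; exact absurd hj h
          · simp only [if_neg hj]
            exact iff_of_true (Or.inl (matL_Lm F)) hj
        rw [this, card_filter_not_lt N a (by omega)]
      have hJ1 : Jcard (fun (r : Fin 2) (j : Fin N) => if r = 0 then (if (j : ℕ) < a then 1 else Lm F)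
          else (if (j : ℕ) < a then Rm F else 1)) (1 : Fin 2) = a := by
        rw [Jcard]
        have : (Finset.univ.filter (fun j : Fin N =>
            matL (if (1 : Fin 2) = 0 then (if (j : ℕ) < a then 1 else Lm F)
              else (if (j : ℕ) < a then Rm F else 1)) ∨
            matR (if (1 : Fin 2) = 0 then (if (j : ℕ) < a then 1 else Lm F)
              else (if (j : ℕ) < a then Rm F else 1)))) =
            Finset.univ.filter (fun j : Fin N => (j : ℕ) < a) := by
          apply Finset.filter_congr
          intro j _
          simp only [if_neg (by norm_num : (1 : Fin 2) ≠ 0)]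
          by_cases hj : (j : ℕ) < a
          · simp only [if_pos hj]
            exact iff_of_true (Or.inr (matR_Rm F)) hj
          · simp only [if_neg hj]
            constructor
            · rintro (h | h)
              · exact absurd h (fun h => matL_not_unit h isUnit_one)
              · exact absurd h (fun h => matR_not_unit h isUnit_one)
            · intro h; exact absurd h hj
        rw [this, card_filter_lt N a (by omega)]
      rw [BH, Fin.sum_univ_two, hJ0, hJ1]
      have hv : a * b + b * a = N ^ 2 / 2 := by
        rw [← half_sq N]; ring
      have : ((![a, b] 0 : ℕ) : ℤ) * (b : ℤ) + ((![a, b] 1 : ℕ) : ℤ) * (a : ℤ)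
          = ((N ^ 2 / 2 : ℕ) : ℤ) := by
        simp only [Matrix.cons_val_zero, Matrix.cons_val_one, Matrix.head_cons]
        rw [← hv]; push_cast; ring
      rw [this]
  · -- lower bound
    rintro x ⟨RL, ℓ, H, hRL, hℓ1, hsum, hmem, rfl⟩
    rw [Fin.sum_univ_two] at hsum
    have hN0 : ℓ 0 ≤ N := by omega
    -- J₀ ≤ ℓ 1
    have hJ0 : Jcard H 0 ≤ ℓ 1 := by
      have hsub : (Finset.univ.filter (fun j : Fin N => matL (H 0 j) ∨ matR (H 0 j)))
          ⊆ Finset.univ.filter (fun j : Fin N => ¬ (j : ℕ) < ℓ 0) := by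
        intro j hj
        simp only [Finset.mem_filter, Finset.mem_univ, true_and] at hj ⊢
        intro hlt
        have hu : IsUnit (H 0 j) := by
          have := hmem.1 0 j (by simp [psum]) (by simpa [psum_one] using hlt)
          exact this
        rcases hj with h | h
        · exact matL_not_unit h hu
        · exact matR_not_unit h hu
      have := Finset.card_le_card hsub
      rw [card_filter_not_lt N (ℓ 0) hN0] at this
      rw [Jcard]; omega
    -- J₁ ≤ ℓ 0
    have hJ1 : Jcard H 1 ≤ ℓ 0 := by
      have hsub : (Finset.univ.filter (fun j : Fin N => matL (H 1 j) ∨ matR (H 1 j)))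
          ⊆ Finset.univ.filter (fun j : Fin N => (j : ℕ) < ℓ 0) := by
        intro j hj
        simp only [Finset.mem_filter, Finset.mem_univ, true_and] at hj ⊢
        by_contra hlt
        have hu : IsUnit (H 1 j) := by
          have := hmem.1 1 j (by simpa [psum_one] using hlt)
            (by rw [Fin.val_one, psum_two]; omega)
          exact this
        rcases hj with h | h
        · exact matL_not_unit h hu
        · exact matR_not_unit h hu
      have := Finset.card_le_card hsub
      rw [card_filter_lt N (ℓ 0) hN0] at this
      rw [Jcard]; omega
    have hkey : ℓ 0 * Jcard H 0 + ℓ 1 * Jcard H 1 ≤ N ^ 2 / 2 := by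
      calc ℓ 0 * Jcard H 0 + ℓ 1 * Jcard H 1
          ≤ ℓ 0 * ℓ 1 + ℓ 1 * ℓ 0 := by
            exact Nat.add_le_add (Nat.mul_le_mul_left _ hJ0) (Nat.mul_le_mul_left _ hJ1)
        _ = 2 * ℓ 0 * ℓ 1 := by ring
        _ ≤ (ℓ 0 + ℓ 1) ^ 2 / 2 := two_mul_le_half_sq _ _
        _ = N ^ 2 / 2 := by rw [hsum]
    rw [BH, Fin.sum_univ_two]
    have : ((ℓ 0 : ℤ) * (Jcard H 0 : ℤ) + (ℓ 1 : ℤ) * (Jcard H 1 : ℤ))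
        ≤ ((N ^ 2 / 2 : ℕ) : ℤ) := by exact_mod_cast hkey
    linarith
end

section
/- For every finite field F_q and every integer N ≥ 3, B̄*(3) ≥ min { 2N(N−1) − N² + ℓ_1² + ℓ_2² + ℓ_3² + ℓ_1(ℓ_3 − 1) }, where the minimum is taken over all compositions (ℓ_1, ℓ_2, ℓ_3) of N into positive parts with ℓ_1 ≤ ℓ_2. -/
open scoped Classical

lemma matLR_not_isUnit {F : Type*} [Field F] {B : Matrix (Fin 2) (Fin 2) F}
    (h : matL B ∨ matR B) : ¬ IsUnit B := by
  intro hu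
  have hdet : IsUnit B.det := (Matrix.isUnit_iff_isUnit_det B).mp hu
  rw [Matrix.det_fin_two] at hdet
  rcases h with ⟨h0, _⟩ | ⟨h0, _⟩
  · rw [h0 0, h0 1] at hdet; simp at hdet
  · rw [h0 0, h0 1] at hdet; simp at hdet

lemma card_colset (N s t : ℕ) (ht : t ≤ N) :
    (Finset.univ.filter (fun i : Fin N => s ≤ (i:ℕ) ∧ (i:ℕ) < t)).card = t - s := by
  have h : (Finset.univ.filter (fun i : Fin N => s ≤ (i:ℕ) ∧ (i:ℕ) < t))
      = Finset.attachFin (Finset.Ico s t)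
        (fun m hm => lt_of_lt_of_le (Finset.mem_Ico.mp hm).2 ht) := by
    ext i; simp [Finset.mem_attachFin, Finset.mem_Ico]
  rw [h, Finset.card_attachFin, Nat.card_Ico]

lemma key_ineq (N a b c A B C : ℕ) (ha : 1 ≤ a) (hc : 1 ≤ c) (hab : a ≤ b)
    (hsum : a + b + c = N) (hB : B + b ≤ N) (hC : C + c ≤ N) (hAB : A + B ≤ N + 1) :
    2*(N:ℤ)*((N:ℤ)-1) - (N:ℤ)^2 + (a:ℤ)^2+(b:ℤ)^2+(c:ℤ)^2 + (a:ℤ)*((c:ℤ)-1)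
      ≤ 2*(N:ℤ)*((N:ℤ)-1) - ((a:ℤ)*(A:ℤ) + (b:ℤ)*(B:ℤ) + (c:ℤ)*(C:ℤ)) := by
  have hAB' : (A:ℤ) + (B:ℤ) ≤ (N:ℤ) + 1 := by exact_mod_cast hAB
  have hB' : (B:ℤ) ≤ (N:ℤ) - (b:ℤ) := by
    have : (B:ℤ) + (b:ℤ) ≤ (N:ℤ) := by exact_mod_cast hB
    linarith
  have hC' : (C:ℤ) ≤ (N:ℤ) - (c:ℤ) := by
    have : (C:ℤ) + (c:ℤ) ≤ (N:ℤ) := by exact_mod_cast hC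
    linarith
  have hab' : (a:ℤ) ≤ (b:ℤ) := by exact_mod_cast hab
  have ha' : (0:ℤ) ≤ (a:ℤ) := Int.ofNat_nonneg a
  have hc' : (0:ℤ) ≤ (c:ℤ) := Int.ofNat_nonneg c
  have hs : (a:ℤ)+(b:ℤ)+(c:ℤ) = (N:ℤ) := by exact_mod_cast hsum
  have h1 : (a:ℤ)*((A:ℤ)+(B:ℤ)) ≤ (a:ℤ)*((N:ℤ)+1) :=
    mul_le_mul_of_nonneg_left hAB' ha'
  have h2 : ((b:ℤ)-(a:ℤ))*(B:ℤ) ≤ ((b:ℤ)-(a:ℤ))*((N:ℤ)-(b:ℤ)) :=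
    mul_le_mul_of_nonneg_left hB' (by linarith)
  have h3 : (c:ℤ)*(C:ℤ) ≤ (c:ℤ)*((N:ℤ)-(c:ℤ)) :=
    mul_le_mul_of_nonneg_left hC' hc'
  nlinarith [h1, h2, h3]

/-- for every finite field and every `N ≥ 3`,
`B̄*(3) ≥ min { 2N(N-1) - N² + ℓ₁² + ℓ₂² + ℓ₃² + ℓ₁(ℓ₃-1) }` over all
compositions `(ℓ₁, ℓ₂, ℓ₃)` of `N` into positive parts with `ℓ₁ ≤ ℓ₂`. -/
theorem statement16 (F : Type*) [Field F] [Fintype F] (N : ℕ) (hN : 3 ≤ N)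
    (b₃ : ℤ) (h₃ : IsLeast (bandSet F N 3) b₃) :
    ∃ l₁ l₂ l₃ : ℕ, 1 ≤ l₁ ∧ 1 ≤ l₂ ∧ 1 ≤ l₃ ∧ l₁ + l₂ + l₃ = N ∧ l₁ ≤ l₂ ∧
      2 * (N : ℤ) * ((N : ℤ) - 1) - (N : ℤ) ^ 2 + (l₁ : ℤ) ^ 2 + (l₂ : ℤ) ^ 2
        + (l₃ : ℤ) ^ 2 + (l₁ : ℤ) * ((l₃ : ℤ) - 1) ≤ b₃ := by

  obtain ⟨RL, ℓ, H, hRL, hpos, hsum, hmem, hb⟩ := h₃.1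
  obtain ⟨hInv, hLL, hRR, hnoL, hnoR⟩ := hmem
  rw [Fin.sum_univ_three] at hsum
  have p0 : psum ℓ 0 = 0 := by
    rw [psum, Finset.sum_filter, Fin.sum_univ_three]; norm_num
  have p1 : psum ℓ 1 = ℓ 0 := by
    rw [psum, Finset.sum_filter, Fin.sum_univ_three]; norm_num
  have p2 : psum ℓ 2 = ℓ 0 + ℓ 1 := by
    rw [psum, Finset.sum_filter, Fin.sum_univ_three]; norm_num
  have p3 : psum ℓ 3 = ℓ 0 + ℓ 1 + ℓ 2 := by
    rw [psum, Finset.sum_filter, Fin.sum_univ_three]; norm_num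
  -- (1) each row avoids its own block of columns:
  have hJle : ∀ r : Fin 3, Jcard H r + ℓ r ≤ N := by
    intro r
    have hps : psum ℓ ((r:ℕ)+1) = psum ℓ (r:ℕ) + ℓ r ∧ psum ℓ ((r:ℕ)+1) ≤ N := by
      fin_cases r
      · show psum ℓ 1 = psum ℓ 0 + ℓ 0 ∧ psum ℓ 1 ≤ N
        omega
      · show psum ℓ 2 = psum ℓ 1 + ℓ 1 ∧ psum ℓ 2 ≤ N
        omega
      · show psum ℓ 3 = psum ℓ 2 + ℓ 2 ∧ psum ℓ 3 ≤ N
        omega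
    have hdisj : Disjoint
        (Finset.univ.filter (fun j : Fin N => matL (H r j) ∨ matR (H r j)))
        (Finset.univ.filter (fun i : Fin N =>
          psum ℓ (r:ℕ) ≤ (i:ℕ) ∧ (i:ℕ) < psum ℓ ((r:ℕ)+1))) := by
      rw [Finset.disjoint_left]
      intro i hi hi'
      simp only [Finset.mem_filter, Finset.mem_univ, true_and] at hi hi'
      exact matLR_not_isUnit hi (hInv r i hi'.1 hi'.2)
    have hcard := card_colset N (psum ℓ (r:ℕ)) (psum ℓ ((r:ℕ)+1)) hps.2
    have hsub : Jcard H r + ℓ r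
        = ((Finset.univ.filter (fun j : Fin N => matL (H r j) ∨ matR (H r j))) ∪
          (Finset.univ.filter (fun i : Fin N =>
            psum ℓ (r:ℕ) ≤ (i:ℕ) ∧ (i:ℕ) < psum ℓ ((r:ℕ)+1)))).card := by
      rw [Finset.card_union_of_disjoint hdisj, hcard, Jcard]
      omega
    calc Jcard H r + ℓ r = _ := hsub
      _ ≤ (Finset.univ : Finset (Fin N)).card := Finset.card_le_univ _
      _ = N := by simp
  -- (2) two same-side rows share at most one column of `J`:
  have hpair : ∀ p q : Fin 3, p ≠ q →
      (((p:ℕ) < RL ∧ (q:ℕ) < RL) ∨ (RL ≤ (p:ℕ) ∧ RL ≤ (q:ℕ))) →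
      Jcard H p + Jcard H q ≤ N + 1 := by
    intro p q hpq hside
    set Jp := Finset.univ.filter (fun j : Fin N => matL (H p j) ∨ matR (H p j)) with hJp
    set Jq := Finset.univ.filter (fun j : Fin N => matL (H q j) ∨ matR (H q j)) with hJq
    have hint : (Jp ∩ Jq).card ≤ 1 := by
      by_contra hcon
      push_neg at hcon
      obtain ⟨i, hi, j, hj, hij⟩ := Finset.one_lt_card.mp hcon
      rw [Finset.mem_inter, hJp, hJq] at hi hj
      simp only [Finset.mem_filter, Finset.mem_univ, true_and] at hi hj
      rcases hside with ⟨hp, hq⟩ | ⟨hp, hq⟩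
      · exact hnoL ⟨p, q, i, j, hpq, hij, hp, hq, hLL p i hp hi.1, hLL q i hq hi.2,
          hLL p j hp hj.1, hLL q j hq hj.2⟩
      · exact hnoR ⟨p, q, i, j, hpq, hij, hp, hq, hRR p i hp hi.1, hRR q i hq hi.2,
          hRR p j hp hj.1, hRR q j hq hj.2⟩
    have hU : (Jp ∪ Jq).card ≤ N := by
      calc (Jp ∪ Jq).card ≤ (Finset.univ : Finset (Fin N)).card := Finset.card_le_univ _
        _ = N := by simp
    have huni := Finset.card_union_add_card_inter Jp Jq
    have e1 : Jcard H p = Jp.card := rfl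
    have e2 : Jcard H q = Jq.card := rfl
    omega
  -- expand b₃
  have hb' : b₃ = 2 * (N : ℤ) * ((N : ℤ) - 1) -
      ((ℓ 0 : ℤ) * (Jcard H 0 : ℤ) + (ℓ 1 : ℤ) * (Jcard H 1 : ℤ)
        + (ℓ 2 : ℤ) * (Jcard H 2 : ℤ)) := by
    rw [hb, BH, Fin.sum_univ_three]
  rcases le_or_gt 2 RL with hRL2 | hRL2
  · -- rows 0 and 1 are on the `𝓛` side
    have hAB : Jcard H 0 + Jcard H 1 ≤ N + 1 :=
      hpair 0 1 (by decide) (Or.inl ⟨by simp only [Fin.val_zero]; omega,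
        by simp only [Fin.val_one]; omega⟩)
    rcases le_total (ℓ 0) (ℓ 1) with hab | hab
    · refine ⟨ℓ 0, ℓ 1, ℓ 2, hpos 0, hpos 1, hpos 2, hsum, hab, ?_⟩
      have K := key_ineq N (ℓ 0) (ℓ 1) (ℓ 2) (Jcard H 0) (Jcard H 1) (Jcard H 2)
        (hpos 0) (hpos 2) hab hsum (hJle 1) (hJle 2) hAB
      rw [hb']; linarith
    · refine ⟨ℓ 1, ℓ 0, ℓ 2, hpos 1, hpos 0, hpos 2, by omega, hab, ?_⟩
      have K := key_ineq N (ℓ 1) (ℓ 0) (ℓ 2) (Jcard H 1) (Jcard H 0) (Jcard H 2)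
        (hpos 1) (hpos 2) hab (by omega) (hJle 0) (hJle 2) (by omega)
      rw [hb']; linarith
  · -- rows 1 and 2 are on the `𝓡` side
    have hAB : Jcard H 1 + Jcard H 2 ≤ N + 1 :=
      hpair 1 2 (by decide) (Or.inr ⟨by simp only [Fin.val_one]; omega,
        by simp only [Fin.val_two]; omega⟩)
    rcases le_total (ℓ 1) (ℓ 2) with hab | hab
    · refine ⟨ℓ 1, ℓ 2, ℓ 0, hpos 1, hpos 2, hpos 0, by omega, hab, ?_⟩
      have K := key_ineq N (ℓ 1) (ℓ 2) (ℓ 0) (Jcard H 1) (Jcard H 2) (Jcard H 0)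
        (hpos 1) (hpos 0) hab (by omega) (hJle 2) (hJle 0) hAB
      rw [hb']; linarith
    · refine ⟨ℓ 2, ℓ 1, ℓ 0, hpos 2, hpos 1, hpos 0, by omega, hab, ?_⟩
      have K := key_ineq N (ℓ 2) (ℓ 1) (ℓ 0) (Jcard H 2) (Jcard H 1) (Jcard H 0)
        (hpos 2) (hpos 0) hab (by omega) (hJle 1) (hJle 0) (by omega)
      rw [hb']; linarith
end

section
/- Let R_L ≥ 3 and let ℓ = (ℓ_1, …, ℓ_{R_L}, ℓ_{R_L+1}) be a composition of N into positive parts, so ℓ_{R_L+1} = N − ℓ*_{R_L}. For every H̄ ∈ H(R_L + 1, R_L, ℓ) there exist positive integers ℓ'_1, ℓ'_2 with ℓ'_1 + ℓ'_2 = ℓ*_{R_L} and an array H̄' ∈ H(3, 2, (ℓ'_1, ℓ'_2, ℓ_{R_L+1})) such that Σ_{r=1}^{R_L} ℓ_r·|J_r(H̄)| ≤ ℓ'_1·|J_1(H̄')| + ℓ'_2·|J_2(H̄')|. -/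
open scoped Classical

lemma matL_not_isUnit {F : Type*} [Field F] (B : Matrix (Fin 2) (Fin 2) F)
    (h : matL B) : ¬ IsUnit B := by
  intro hu
  have hdet := (Matrix.isUnit_iff_isUnit_det B).1 hu
  rw [Matrix.det_fin_two, h.1 0, h.1 1] at hdet
  simp at hdet

lemma matR_not_isUnit {F : Type*} [Field F] (B : Matrix (Fin 2) (Fin 2) F)
    (h : matR B) : ¬ IsUnit B := by
  intro hu
  have hdet := (Matrix.isUnit_iff_isUnit_det B).1 hu
  rw [Matrix.det_fin_two, h.1 0, h.1 1] at hdet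
  simp at hdet

lemma card_filter_val_mem (N : ℕ) (s : Finset ℕ) (hs : ∀ k ∈ s, k < N) :
    (Finset.univ.filter fun i : Fin N => (i : ℕ) ∈ s).card = s.card := by
  apply Finset.card_bij (fun (i : Fin N) _ => (i : ℕ))
  · intro a ha; exact (Finset.mem_filter.1 ha).2
  · intro a _ b _ h; exact Fin.val_injective h
  · intro b hb; exact ⟨⟨b, hs b hb⟩, Finset.mem_filter.2 ⟨Finset.mem_univ _, hb⟩, rfl⟩

lemma psum_succ {R : ℕ} (ℓ : Fin R → ℕ) (r : Fin R) :
    psum ℓ ((r : ℕ) + 1) = psum ℓ (r : ℕ) + ℓ r := by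
  unfold psum
  have h : (Finset.univ.filter fun k : Fin R => (k : ℕ) < (r : ℕ) + 1)
      = insert r (Finset.univ.filter fun k : Fin R => (k : ℕ) < (r : ℕ)) := by
    ext k
    simp only [Finset.mem_filter, Finset.mem_univ, true_and, Finset.mem_insert, Fin.ext_iff]
    omega
  rw [h, Finset.sum_insert (by simp), add_comm]

lemma psum_le_total {R : ℕ} (ℓ : Fin R → ℕ) (k : ℕ) : psum ℓ k ≤ ∑ r, ℓ r :=
  Finset.sum_le_sum_of_subset (Finset.filter_subset _ _)

/-- let `R_L ≥ 3` and let `ℓ` be a composition of `N` into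
`R_L + 1` positive parts.  For every `H̄ ∈ H(R_L + 1, R_L, ℓ)` there are
positive `ℓ'₁, ℓ'₂` with `ℓ'₁ + ℓ'₂ = ℓ*_{R_L} = N - ℓ_{R_L+1}` and an
array `H̄' ∈ H(3, 2, (ℓ'₁, ℓ'₂, ℓ_{R_L+1}))` with
`Σ_{r=1}^{R_L} ℓ_r·|J_r(H̄)| ≤ ℓ'₁·|J_1(H̄')| + ℓ'₂·|J_2(H̄')|`. -/
theorem statement17 (F : Type*) [Field F] [Fintype F] (N : ℕ) (hN : 2 ≤ N)
    (RL : ℕ) (hRL : 3 ≤ RL)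
    (ℓ : Fin (RL + 1) → ℕ) (hpos : ∀ r, 1 ≤ ℓ r) (hsum : ∑ r, ℓ r = N)
    (H : Fin (RL + 1) → Fin N → Matrix (Fin 2) (Fin 2) F)
    (hH : memH N (RL + 1) RL ℓ H) :
    ∃ l₁ l₂ : ℕ, 1 ≤ l₁ ∧ 1 ≤ l₂ ∧ l₁ + l₂ = N - ℓ (Fin.last RL) ∧
      ∃ H' : Fin 3 → Fin N → Matrix (Fin 2) (Fin 2) F,
        memH N 3 2 ![l₁, l₂, ℓ (Fin.last RL)] H' ∧
        ∑ r ∈ Finset.univ.filter (fun r : Fin (RL + 1) => (r : ℕ) < RL),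
            ℓ r * Jcard H r ≤
          l₁ * Jcard H' 0 + l₂ * Jcard H' 1 := by
  classical
  set m := ℓ (Fin.last RL) with hm_def
  have hm1 : 1 ≤ m := hpos _
  set T : Finset (Fin (RL + 1)) := Finset.univ.filter (fun r => (r : ℕ) < RL) with hT_def
  set Lc : ℕ := ∑ r ∈ T, ℓ r with hL_def
  have hLm : Lc + m = N := by
    have hsplit := Finset.sum_filter_add_sum_filter_not Finset.univ
      (fun r : Fin (RL + 1) => (r : ℕ) < RL) ℓ
    have hone : Finset.univ.filter (fun r : Fin (RL + 1) => ¬ (r : ℕ) < RL)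
        = {Fin.last RL} := by
      ext r
      simp only [Finset.mem_filter, Finset.mem_univ, true_and, Finset.mem_singleton,
        not_lt, Fin.ext_iff, Fin.val_last]
      have := r.isLt
      omega
    rw [hone, Finset.sum_singleton, hsum] at hsplit
    exact hsplit
  -- J_r avoids its own block
  have hJ : ∀ r : Fin (RL + 1), Jcard H r + ℓ r ≤ N := by
    intro r
    have hps := psum_succ ℓ r
    have hup : psum ℓ ((r : ℕ) + 1) ≤ N := by
      have := psum_le_total ℓ ((r : ℕ) + 1); rwa [hsum] at this
    set Jr := Finset.univ.filter (fun j : Fin N => matL (H r j) ∨ matR (H r j)) with hJr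
    set Br := Finset.univ.filter
      (fun i : Fin N => (i : ℕ) ∈ Finset.Ico (psum ℓ (r : ℕ)) (psum ℓ ((r : ℕ) + 1))) with hBr
    have hBcard : Br.card = ℓ r := by
      rw [hBr, card_filter_val_mem _ _ (fun k hk => lt_of_lt_of_le (Finset.mem_Ico.1 hk).2 hup),
        Nat.card_Ico]
      omega
    have hdisj : Disjoint Jr Br := by
      rw [Finset.disjoint_left]
      intro i hiJ hiB
      have hmem := Finset.mem_Ico.1 (Finset.mem_filter.1 hiB).2
      have hunit := hH.1 r i hmem.1 hmem.2
      rcases (Finset.mem_filter.1 hiJ).2 with hL | hR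
      · exact matL_not_isUnit _ hL hunit
      · exact matR_not_isUnit _ hR hunit
    have hJc : Jcard H r = Jr.card := rfl
    have hle : (Jr ∪ Br).card ≤ N := by
      have := Finset.card_le_univ (Jr ∪ Br)
      simpa using this
    rw [Finset.card_union_of_disjoint hdisj, hBcard] at hle
    omega
  -- two rows below RL share at most one L-column
  have hpair : ∀ p q : Fin (RL + 1), (p : ℕ) < RL → (q : ℕ) < RL → p ≠ q →
      Jcard H p + Jcard H q ≤ N + 1 := by
    intro p q hp hq hpq
    set Jp := Finset.univ.filter (fun j : Fin N => matL (H p j) ∨ matR (H p j)) with hJp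
    set Jq := Finset.univ.filter (fun j : Fin N => matL (H q j) ∨ matR (H q j)) with hJq
    have hinter : (Jp ∩ Jq).card ≤ 1 := by
      rw [Finset.card_le_one]
      intro i hi j hj
      by_contra hij
      apply hH.2.2.2.1
      have hiP := (Finset.mem_filter.1 (Finset.mem_inter.1 hi).1).2
      have hiQ := (Finset.mem_filter.1 (Finset.mem_inter.1 hi).2).2
      have hjP := (Finset.mem_filter.1 (Finset.mem_inter.1 hj).1).2
      have hjQ := (Finset.mem_filter.1 (Finset.mem_inter.1 hj).2).2
      exact ⟨p, q, i, j, hpq, hij, hp, hq, hH.2.1 p i hp hiP, hH.2.1 q i hq hiQ,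
        hH.2.1 p j hp hjP, hH.2.1 q j hq hjQ⟩
    have hunion : (Jp ∪ Jq).card ≤ N := by
      have := Finset.card_le_univ (Jp ∪ Jq)
      simpa using this
    have hJcp : Jcard H p = Jp.card := rfl
    have hJcq : Jcard H q = Jq.card := rfl
    have := Finset.card_union_add_card_inter Jp Jq
    omega
  -- choose the two dominant rows
  have hTne : T.Nonempty := ⟨⟨0, by omega⟩, Finset.mem_filter.2 ⟨Finset.mem_univ _,
    show 0 < RL by omega⟩⟩
  obtain ⟨p, hpT, hpmax⟩ := Finset.exists_max_image T (fun r => Jcard H r) hTne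
  have hpRL : (p : ℕ) < RL := (Finset.mem_filter.1 hpT).2
  have hTe : (T.erase p).Nonempty := by
    have h0T : (⟨0, by omega⟩ : Fin (RL + 1)) ∈ T :=
      Finset.mem_filter.2 ⟨Finset.mem_univ _, show 0 < RL by omega⟩
    have h1T : (⟨1, by omega⟩ : Fin (RL + 1)) ∈ T :=
      Finset.mem_filter.2 ⟨Finset.mem_univ _, show 1 < RL by omega⟩
    by_cases hp0 : p = (⟨0, by omega⟩ : Fin (RL + 1))
    · exact ⟨⟨1, by omega⟩, Finset.mem_erase.2 ⟨by rw [hp0]; intro h; simpa using Fin.ext_iff.1 h, h1T⟩⟩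
    · exact ⟨⟨0, by omega⟩, Finset.mem_erase.2 ⟨fun h => hp0 h.symm, h0T⟩⟩
  obtain ⟨q, hqTe, hqmax⟩ := Finset.exists_max_image (T.erase p) (fun r => Jcard H r) hTe
  have hqp : q ≠ p := (Finset.mem_erase.1 hqTe).1
  have hqT : q ∈ T := (Finset.mem_erase.1 hqTe).2
  have hqRL : (q : ℕ) < RL := (Finset.mem_filter.1 hqT).2
  set x := Jcard H p with hx_def
  set y := Jcard H q with hy_def
  have hyx : y ≤ x := hpmax q hqT
  have hxp : x + ℓ p ≤ N := hJ p
  have hyq : y + ℓ q ≤ N := hJ q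
  have hxy : x + y ≤ N + 1 := hpair p q hpRL hqRL (Ne.symm hqp)
  set L' := ∑ r ∈ T.erase p, ℓ r with hL'_def
  have hLsplit : Lc = ℓ p + L' := (Finset.add_sum_erase T ℓ hpT).symm
  have hℓq : 1 ≤ ℓ q := hpos q
  have hqL' : ℓ q ≤ L' := Finset.single_le_sum (fun r _ => Nat.zero_le _) hqTe
  have hℓp : 1 ≤ ℓ p := hpos p
  set l1 := max (ℓ p) (y - m) with hl1_def
  have hl1p : ℓ p ≤ l1 := le_max_left _ _
  have hyml1 : y - m ≤ l1 := le_max_right _ _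
  have hl1pos : 1 ≤ l1 := le_trans hℓp hl1p
  have hl1L : l1 + 1 ≤ Lc := by
    rcases max_choice (ℓ p) (y - m) with h | h <;> rw [hl1_def, h] <;> omega
  have hl1x : l1 + x ≤ N := by
    rcases max_choice (ℓ p) (y - m) with h | h <;> rw [hl1_def, h] <;> omega
  have hyl1m : y ≤ l1 + m := by omega
  set l2 := Lc - l1 with hl2_def
  have hl2pos : 1 ≤ l2 := by omega
  have hl12 : l1 + l2 = Lc := by omega
  have hyN : y ≤ N := by omega
  -- the two column sets
  set S1 : Finset (Fin N) :=
    Finset.univ.filter (fun i => (i : ℕ) ∈ Finset.Ico l1 (l1 + x)) with hS1_def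
  set S2 : Finset (Fin N) :=
    Finset.univ.filter (fun i => (i : ℕ) ∈ Finset.Ico 0 (min y l1) ∪
      Finset.Ico (N - (y - l1)) N) with hS2_def
  have hS1mem : ∀ i : Fin N, i ∈ S1 ↔ l1 ≤ (i : ℕ) ∧ (i : ℕ) < l1 + x := by
    intro i
    simp [hS1_def, Finset.mem_Ico]
  have hS2mem : ∀ i : Fin N, i ∈ S2 ↔
      ((i : ℕ) < min y l1 ∨ N - (y - l1) ≤ (i : ℕ)) := by
    intro i
    have hiN := i.isLt
    simp only [hS2_def, Finset.mem_filter, Finset.mem_univ, true_and, Finset.mem_union,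
      Finset.mem_Ico]
    omega
  have hS1card : S1.card = x := by
    rw [hS1_def, card_filter_val_mem _ _
      (fun k hk => lt_of_lt_of_le (Finset.mem_Ico.1 hk).2 hl1x), Nat.card_Ico]
    omega
  have hS2card : S2.card = y := by
    rw [hS2_def, card_filter_val_mem _ _ ?_]
    · rw [Finset.card_union_of_disjoint ?_, Nat.card_Ico, Nat.card_Ico]
      · omega
      · rw [Finset.disjoint_left]
        intro k hk1 hk2
        rw [Finset.mem_Ico] at hk1 hk2
        omega
    · intro k hk
      rcases Finset.mem_union.1 hk with h | h <;> rw [Finset.mem_Ico] at h <;> omega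
  -- building blocks
  set E : Matrix (Fin 2) (Fin 2) F := Matrix.of (fun _ q => if q = 0 then (0 : F) else 1)
    with hE_def
  have hEL : matL E := by
    constructor
    · intro pp; simp [hE_def]
    · intro pp; simp [hE_def]
  have hER : ¬ matR E := by
    intro h
    have := h.2 0
    simp [hE_def] at this
  have h1L : ¬ matL (1 : Matrix (Fin 2) (Fin 2) F) := by
    intro h
    have := h.1 0
    simp at this
  have h1R : ¬ matR (1 : Matrix (Fin 2) (Fin 2) F) := by
    intro h
    have := h.1 1
    simp at this
  -- the new array
  set H' : Fin 3 → Fin N → Matrix (Fin 2) (Fin 2) F :=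
    fun r j => if (r : ℕ) = 0 then (if j ∈ S1 then E else 1)
      else if (r : ℕ) = 1 then (if j ∈ S2 then E else 1) else 1 with hH'_def
  have hrow : ∀ (r : Fin 3) (k : Fin N), (matL (H' r k) ∨ matR (H' r k)) →
      ((r : ℕ) = 0 ∧ k ∈ S1) ∨ ((r : ℕ) = 1 ∧ k ∈ S2) := by
    intro r k hk
    by_cases h0 : (r : ℕ) = 0
    · left
      refine ⟨h0, ?_⟩
      by_contra hkS
      rw [hH'_def] at hk
      simp only [h0, if_pos, if_true, if_neg hkS] at hk
      exact hk.elim h1L h1R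
    · by_cases h1 : (r : ℕ) = 1
      · right
        refine ⟨h1, ?_⟩
        by_contra hkS
        rw [hH'_def] at hk
        simp only [h0, h1, if_false, if_true, if_neg hkS] at hk
        exact hk.elim h1L h1R
      · rw [hH'_def] at hk
        simp only [h0, h1, if_false] at hk
        exact absurd hk (by simp [h1L, h1R])
  have hH'0 : ∀ k : Fin N, H' 0 k = if k ∈ S1 then E else 1 := by
    intro k; rw [hH'_def]; norm_num
  have hH'1 : ∀ k : Fin N, H' 1 k = if k ∈ S2 then E else 1 := by
    intro k; rw [hH'_def]; norm_num
  have hJ0 : Jcard H' 0 = x := by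
    rw [← hS1card]
    unfold Jcard
    congr 1
    ext j
    simp only [Finset.mem_filter, Finset.mem_univ, true_and]
    constructor
    · intro h
      rcases hrow 0 j h with ⟨_, hj⟩ | ⟨h1, _⟩
      · exact hj
      · simp at h1
    · intro hj
      rw [hH'0 j, if_pos hj]
      exact Or.inl hEL
  have hJ1 : Jcard H' 1 = y := by
    rw [← hS2card]
    unfold Jcard
    congr 1
    ext j
    simp only [Finset.mem_filter, Finset.mem_univ, true_and]
    constructor
    · intro h
      rcases hrow 1 j h with ⟨h0, _⟩ | ⟨_, hj⟩
      · simp at h0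
      · exact hj
    · intro hj
      rw [hH'1 j, if_pos hj]
      exact Or.inl hEL
  -- psum values for the new composition
  have hp1 : psum ![l1, l2, m] 1 = l1 := by
    simp [psum, Finset.sum_filter, Fin.sum_univ_three]
  have hp2 : psum ![l1, l2, m] 2 = l1 + l2 := by
    simp [psum, Finset.sum_filter, Fin.sum_univ_three]
  have hp3 : psum ![l1, l2, m] 3 = l1 + l2 + m := by
    simp [psum, Finset.sum_filter, Fin.sum_univ_three]
  refine ⟨l1, l2, hl1pos, hl2pos, by omega, H', ⟨?_, ?_, ?_, ?_, ?_⟩, ?_⟩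
  · -- (i) invertibility
    intro r i hi1 hi2
    have hr3 := r.isLt
    have hcases : (r : ℕ) = 0 ∨ (r : ℕ) = 1 ∨ (r : ℕ) = 2 := by omega
    rcases hcases with hc | hc | hc
    · rw [hc] at hi2
      rw [show (0 : ℕ) + 1 = 1 by rfl, hp1] at hi2
      have hiS : i ∉ S1 := by
        intro hmem
        rw [hS1mem] at hmem
        omega
      rw [hH'_def]
      simp only [hc, if_pos, if_true, if_neg hiS]
      exact isUnit_one
    · rw [hc, hp1] at hi1
      rw [hc] at hi2
      rw [show (1 : ℕ) + 1 = 2 by rfl, hp2] at hi2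
      have hiS : i ∉ S2 := by
        intro hmem
        rw [hS2mem] at hmem
        omega
      rw [hH'_def]
      simp only [hc, if_false, if_true, if_neg hiS]
      norm_num
    · rw [hH'_def]
      simp only [hc]
      norm_num
  · -- (ii) L rows
    intro r j hr h
    rcases hrow r j h with ⟨h0, hj⟩ | ⟨h1, hj⟩
    · rw [hH'_def]
      simp only [h0, if_pos, if_true, if_pos hj]
      exact hEL
    · rw [hH'_def]
      simp only [h1, if_false, if_true, if_pos hj]
      exact hEL
  · -- (ii) R rows
    intro r j hr h
    rcases hrow r j h with ⟨h0, _⟩ | ⟨h1, _⟩ <;> omega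
  · -- (iii) L pairs
    rintro ⟨r1, r2, i, j, hr12, hij, hr1, hr2, hA, hB, hC, hD⟩
    have kA := hrow r1 i (Or.inl hA)
    have kB := hrow r2 i (Or.inl hB)
    have kC := hrow r1 j (Or.inl hC)
    have kD := hrow r2 j (Or.inl hD)
    have hr12' : (r1 : ℕ) ≠ (r2 : ℕ) := fun h => hr12 (Fin.ext h)
    have hiS1 : i ∈ S1 ∧ i ∈ S2 := by
      rcases kA with ⟨h0, h⟩ | ⟨h1, h⟩
      · rcases kB with ⟨h0', h'⟩ | ⟨h1', h'⟩
        · omega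
        · exact ⟨h, h'⟩
      · rcases kB with ⟨h0', h'⟩ | ⟨h1', h'⟩
        · exact ⟨h', h⟩
        · omega
    have hjS1 : j ∈ S1 ∧ j ∈ S2 := by
      rcases kC with ⟨h0, h⟩ | ⟨h1, h⟩
      · rcases kD with ⟨h0', h'⟩ | ⟨h1', h'⟩
        · omega
        · exact ⟨h, h'⟩
      · rcases kD with ⟨h0', h'⟩ | ⟨h1', h'⟩
        · exact ⟨h', h⟩
        · omega
    have hi1 := (hS1mem i).1 hiS1.1
    have hi2 := (hS2mem i).1 hiS1.2
    have hj1 := (hS1mem j).1 hjS1.1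
    have hj2 := (hS2mem j).1 hjS1.2
    have hijv : (i : ℕ) ≠ (j : ℕ) := fun h => hij (Fin.ext h)
    omega
  · -- (iii) R pairs
    rintro ⟨r1, r2, i, j, hr12, hij, hr1, hr2, hA, hB, hC, hD⟩
    have h1 := r1.isLt
    have h2 := r2.isLt
    exact hr12 (Fin.ext (by omega))
  · -- the sum inequality
    rw [hJ0, hJ1]
    have hW : ∑ r ∈ T, ℓ r * Jcard H r ≤ ℓ p * x + L' * y := by
      rw [← Finset.add_sum_erase T _ hpT]
      refine Nat.add_le_add_left ?_ _
      calc ∑ r ∈ T.erase p, ℓ r * Jcard H r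
          ≤ ∑ r ∈ T.erase p, ℓ r * y :=
            Finset.sum_le_sum (fun r hr => Nat.mul_le_mul_left _ (hqmax r hr))
        _ = L' * y := by rw [hL'_def, Finset.sum_mul]
    refine le_trans hW ?_
    obtain ⟨d, hd⟩ : ∃ d, l1 = ℓ p + d := ⟨l1 - ℓ p, by omega⟩
    have hL'd : L' = l2 + d := by omega
    have hdy : d * y ≤ d * x := Nat.mul_le_mul_left d hyx
    calc ℓ p * x + L' * y = ℓ p * x + l2 * y + d * y := by rw [hL'd]; ring
      _ ≤ ℓ p * x + l2 * y + d * x := Nat.add_le_add_left hdy _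
      _ = l1 * x + l2 * y := by rw [hd]; ring
end
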